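/- arXiv:1912.10233 — 5 statements merged into one kernel-verified Lean document; each statement's English description precedes it below -/
import Mathlib

section
/- The normalized mean distance on the unit sphere converges to √2 as the dimension grows: lim_{d→∞} 2^{d−1} (Γ(d/2))² / (√π · Γ(d − 1/2)) = √2, where the limit is taken over integers d → ∞. -/
/-!
By the duplication formula, `ξ(d) = R(d - 1/2) / R(d/2)` with `R(x) = Γ(x + 1/2) / Γ(x)`.
Log-convexity of `Γ` squeezes `R(x)` between `√(x - 1/2)` and `√x`, so `R(x) ~ √x` and
`ξ(d) ~ √(d - 1/2) / √(d/2) → √2`.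
-/

open Real Filter Asymptotics Topology

namespace Real

theorem Gamma_add_half_sq_le_Gamma_mul_Gamma_add_one {x : ℝ} (hx : 0 < x) :
    Gamma (x + 1 / 2) ^ 2 ≤ Gamma x * Gamma (x + 1) := by
  have h₀ := Gamma_pos_of_pos hx
  have h₁ := Gamma_pos_of_pos (by linarith : 0 < x + 1)
  have h := Gamma_mul_add_mul_le_rpow_Gamma_mul_rpow_Gamma hx (by linarith : 0 < x + 1)
    one_half_pos one_half_pos (add_halves 1)
  rw [show 1 / 2 * x + 1 / 2 * (x + 1) = x + 1 / 2 by ring, ← mul_rpow h₀.le h₁.le,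
    ← sqrt_eq_rpow] at h
  calc Gamma (x + 1 / 2) ^ 2 ≤ √(Gamma x * Gamma (x + 1)) ^ 2 :=
        pow_le_pow_left₀ (Gamma_pos_of_pos (by linarith)).le h 2
    _ = Gamma x * Gamma (x + 1) := sq_sqrt (mul_pos h₀ h₁).le

theorem Gamma_add_half_le_sqrt_mul_Gamma {x : ℝ} (hx : 0 < x) :
    Gamma (x + 1 / 2) ≤ √x * Gamma x := by
  refine abs_le_of_sq_le_sq' ?_ (by have := Gamma_pos_of_pos hx; positivity) |>.2
  calc Gamma (x + 1 / 2) ^ 2 ≤ Gamma x * Gamma (x + 1) :=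
        Gamma_add_half_sq_le_Gamma_mul_Gamma_add_one hx
    _ = (√x * Gamma x) ^ 2 := by rw [Gamma_add_one hx.ne', mul_pow, sq_sqrt hx.le]; ring

theorem sqrt_sub_half_mul_Gamma_le_Gamma_add_half {x : ℝ} (hx : 1 / 2 < x) :
    √(x - 1 / 2) * Gamma x ≤ Gamma (x + 1 / 2) := by
  have hy : 0 < x - 1 / 2 := by linarith
  have h := Gamma_add_half_sq_le_Gamma_mul_Gamma_add_one hy
  rw [sub_add_cancel, Gamma_add_one hy.ne'] at h
  have hrec : Gamma (x + 1 / 2) = (x - 1 / 2) * Gamma (x - 1 / 2) := by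
    rw [← Gamma_add_one hy.ne']; ring_nf
  refine abs_le_of_sq_le_sq' ?_ (Gamma_pos_of_pos (by linarith)).le |>.2
  calc (√(x - 1 / 2) * Gamma x) ^ 2 = (x - 1 / 2) * Gamma x ^ 2 := by
        rw [mul_pow, sq_sqrt hy.le]
    _ ≤ (x - 1 / 2) * (Gamma (x - 1 / 2) * ((x - 1 / 2) * Gamma (x - 1 / 2))) := by gcongr
    _ = Gamma (x + 1 / 2) ^ 2 := by rw [hrec]; ring

theorem Gamma_add_half_div_Gamma_isEquivalent_sqrt :
    (fun x ↦ Gamma (x + 1 / 2) / Gamma x) ~[atTop] (√·) := by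
  refine isEquivalent_of_tendsto_one ?_
  have hlow : Tendsto (fun x : ℝ ↦ √(1 - (2 * x)⁻¹)) atTop (𝓝 1) := by
    simpa using ((tendsto_inv_atTop_zero.comp (tendsto_id.const_mul_atTop two_pos)).const_sub
      1).sqrt
  refine tendsto_of_tendsto_of_tendsto_of_le_of_le' hlow tendsto_const_nhds ?_ ?_
  all_goals filter_upwards [eventually_gt_atTop 1] with x hx
  all_goals have hΓ := Gamma_pos_of_pos (by linarith : 0 < x)
  all_goals have hs : 0 < √x := sqrt_pos.2 (by linarith)
  · have hpos : 0 ≤ 1 - (2 * x)⁻¹ := by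
      have : (2 * x)⁻¹ ≤ 1 := inv_le_one_of_one_le₀ (by linarith)
      linarith
    rw [Pi.div_apply, le_div_iff₀ hs, le_div_iff₀ hΓ, ← sqrt_mul hpos,
      show (1 - (2 * x)⁻¹) * x = x - 1 / 2 by field_simp]
    exact sqrt_sub_half_mul_Gamma_le_Gamma_add_half (by linarith)
  · rw [Pi.div_apply, div_le_one hs, div_le_iff₀ hΓ]
    exact Gamma_add_half_le_sqrt_mul_Gamma (by linarith)

end Real

noncomputable def sphereMeanDist (d : ℝ) : ℝ :=
  2 ^ (d - 1) * Gamma (d / 2) ^ 2 / (√π * Gamma (d - 1 / 2))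

theorem sphereMeanDist_eq {d : ℝ} (hd : 1 / 2 < d) :
    sphereMeanDist d = Gamma d / Gamma (d - 1 / 2) / (Gamma (d / 2 + 1 / 2) / Gamma (d / 2)) := by
  have hdup := Gamma_mul_Gamma_add_half (d / 2)
  rw [mul_div_cancel₀ d two_ne_zero] at hdup
  have h2 := (Gamma_pos_of_pos (by linarith : 0 < d / 2 + 1 / 2)).ne'
  have h3 := (Gamma_pos_of_pos (by linarith : 0 < d - 1 / 2)).ne'
  have hpow : (2 : ℝ) ^ (d - 1) * 2 ^ (1 - d) = 1 := by
    rw [← rpow_add two_pos]; norm_num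
  rw [sphereMeanDist, div_div_eq_mul_div, div_mul_eq_mul_div, div_div,
    div_eq_div_iff (mul_ne_zero (sqrt_pos.2 pi_pos).ne' h3) (mul_ne_zero h3 h2)]
  linear_combination (2 ^ (d - 1) * Gamma (d / 2) * Gamma (d - 1 / 2)) * hdup +
    (Gamma (d / 2) * Gamma (d - 1 / 2) * Gamma d * √π) * hpow

theorem tendsto_sphereMeanDist : Tendsto sphereMeanDist atTop (𝓝 √2) := by
  have hR := Gamma_add_half_div_Gamma_isEquivalent_sqrt
  have hnum : (fun d ↦ Gamma d / Gamma (d - 1 / 2)) ~[atTop] fun d ↦ √(d - 1 / 2) := by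
    have := hR.comp_tendsto (tendsto_atTop_add_const_right _ (-(1 / 2)) tendsto_id)
    simpa only [Function.comp_def, id, ← sub_eq_add_neg, sub_add_cancel] using this
  have hden : (fun d ↦ Gamma (d / 2 + 1 / 2) / Gamma (d / 2)) ~[atTop] fun d ↦ √(d / 2) :=
    hR.comp_tendsto (tendsto_id.atTop_div_const two_pos)
  have hequiv : sphereMeanDist ~[atTop] fun d ↦ √(d - 1 / 2) / √(d / 2) := by
    refine (hnum.div hden).congr_left ?_
    filter_upwards [eventually_gt_atTop (1 / 2)] with d hd
    exact (sphereMeanDist_eq hd).symm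
  refine hequiv.symm.tendsto_nhds ?_
  have hlim : Tendsto (fun d : ℝ ↦ √(2 - d⁻¹)) atTop (𝓝 √2) := by
    simpa using (tendsto_inv_atTop_zero.const_sub 2).sqrt
  refine hlim.congr' ?_
  filter_upwards [eventually_gt_atTop 1] with d hd
  rw [← sqrt_div' _ (by linarith : 0 ≤ d / 2)]
  congr 1
  field_simp

/-- The mean distance between two independent uniform random points on the
unit sphere `S^{d−1} ⊂ ℝ^d`, `ξ_μ(d) = 2^{d−1} (Γ(d/2))² / (√π · Γ(d − 1/2))`,
converges to `√2` as the integer dimension `d → ∞`. -/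
theorem mean_distance_tendsto_sqrt_two :
    Tendsto
      (fun d : ℕ =>
        (2 : ℝ) ^ ((d : ℝ) - 1) * Real.Gamma ((d : ℝ) / 2) ^ 2
          / (Real.sqrt π * Real.Gamma ((d : ℝ) - 1 / 2)))
      atTop (nhds (Real.sqrt 2)) :=
  tendsto_sphereMeanDist.comp tendsto_natCast_atTop_atTop
end

section
/- The normalized mean distance on the unit sphere admits the refined asymptotic ξ_μ(d) = √2 (1 − 1/(8d) + o(1/d)): writing ξ_μ(d) = 2^{d−1} (Γ(d/2))² / (√π · Γ(d − 1/2)), one has lim_{d→∞} d · (√2 − ξ_μ(d)) = √2 / 8, where the limit is taken over integers d → ∞. -/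
/-!
With `R x = Γ(x + 1/2) / Γ(x)`, the duplication formula gives `ξ_μ(d) = R(d - 1/2) / R(d/2)`, so
the claim reduces to the second-order asymptotic `R(x)² = x - 1/4 + o(1)`. Log-convexity of `Γ`
only gives `x - 1/2 ≤ R(x)² ≤ x`. The recurrence `R(x + 1) = (x + 1/2) / x · R(x)` makes the
ratios `(x - 1/4 - R(x)²) / R(x)²` and `(R(x)² - x + 1/4 - 1/(16(x - 1))) / R(x)²`
nondecreasing along `x, x + 1, x + 2, …`; since `R(x + n)² → ∞` while both numerators stay
bounded above, both ratios are nonpositive, i.e. `x - 1/4 ≤ R(x)² ≤ x - 1/4 + 1/(16(x - 1))`.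
-/

open Real Filter Topology

lemma Real.Gamma_add_div_two_sq_le {s t : ℝ} (hs : 0 < s) (ht : 0 < t) :
    Gamma ((s + t) / 2) ^ 2 ≤ Gamma s * Gamma t := by
  have h := Gamma_mul_add_mul_le_rpow_Gamma_mul_rpow_Gamma hs ht one_half_pos one_half_pos
    (add_halves 1)
  rw [← mul_add, one_div_mul_eq_div, ← sqrt_eq_rpow, ← sqrt_eq_rpow, ← sqrt_mul
    (Gamma_pos_of_pos hs).le] at h
  calc Gamma ((s + t) / 2) ^ 2 ≤ √(Gamma s * Gamma t) ^ 2 :=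
        pow_le_pow_left₀ (Gamma_pos_of_pos (by positivity)).le h 2
    _ = Gamma s * Gamma t := sq_sqrt (mul_pos (Gamma_pos_of_pos hs) (Gamma_pos_of_pos ht)).le

noncomputable def gammaHalfRatio (x : ℝ) : ℝ := Gamma (x + 1 / 2) / Gamma x

lemma gammaHalfRatio_pos {x : ℝ} (hx : 0 < x) : 0 < gammaHalfRatio x :=
  div_pos (Gamma_pos_of_pos (by linarith)) (Gamma_pos_of_pos hx)

lemma gammaHalfRatio_sq_le {x : ℝ} (hx : 0 < x) : gammaHalfRatio x ^ 2 ≤ x := by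
  have h := Gamma_add_div_two_sq_le hx (by linarith : 0 < x + 1)
  rw [show (x + (x + 1)) / 2 = x + 1 / 2 by ring, Gamma_add_one hx.ne'] at h
  rw [gammaHalfRatio, div_pow, div_le_iff₀ (pow_pos (Gamma_pos_of_pos hx) 2)]
  linarith

lemma sub_half_le_gammaHalfRatio_sq {x : ℝ} (hx : 1 / 2 < x) :
    x - 1 / 2 ≤ gammaHalfRatio x ^ 2 := by
  have hx' : 0 < x - 1 / 2 := by linarith
  have h := Gamma_add_div_two_sq_le hx' (by linarith : 0 < x + 1 / 2)
  have hrec : Gamma (x + 1 / 2) = (x - 1 / 2) * Gamma (x - 1 / 2) := by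
    rw [← Gamma_add_one hx'.ne']
    ring_nf
  rw [show (x - 1 / 2 + (x + 1 / 2)) / 2 = x by ring, hrec] at h
  rw [gammaHalfRatio, div_pow, le_div_iff₀ (pow_pos (Gamma_pos_of_pos (by linarith)) 2), hrec]
  nlinarith [mul_le_mul_of_nonneg_left h hx'.le]

lemma gammaHalfRatio_add_one {x : ℝ} (hx : 0 < x) :
    gammaHalfRatio (x + 1) = (x + 1 / 2) / x * gammaHalfRatio x := by
  rw [gammaHalfRatio, gammaHalfRatio, add_right_comm, Gamma_add_one (by positivity),
    Gamma_add_one hx.ne']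
  field_simp

lemma tendsto_gammaHalfRatio_sq_atTop : Tendsto (fun x => gammaHalfRatio x ^ 2) atTop atTop :=
  tendsto_atTop_mono' _
    ((eventually_gt_atTop (1 / 2)).mono fun _ => sub_half_le_gammaHalfRatio_sq)
    (tendsto_atTop_add_const_right _ _ tendsto_id)

/-- If `f / g` is nondecreasing along `x + ℕ`, then `f (x + n) ≥ g (x + n) * (f x / g x)`,
which is unbounded when `f x > 0`. -/
lemma nonpos_of_mul_le_mul_add_one {f g : ℝ → ℝ} {x C : ℝ} (hg : ∀ y, x ≤ y → 0 < g y)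
    (hg_top : Tendsto g atTop atTop)
    (hstep : ∀ y, x ≤ y → f y * g (y + 1) ≤ f (y + 1) * g y)
    (hC : ∀ y, x ≤ y → f y ≤ C) : f x ≤ 0 := by
  have hx : ∀ n : ℕ, x ≤ x + n := fun n => le_add_of_nonneg_right n.cast_nonneg
  set a : ℕ → ℝ := fun n => f (x + n) / g (x + n)
  have ha : Monotone a := monotone_nat_of_le_succ fun n => by
    rw [div_le_div_iff₀ (hg _ (hx n)) (hg _ (hx (n + 1))), Nat.cast_succ, ← add_assoc]
    exact hstep _ (hx n)
  by_contra! hpos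
  have ha0 : 0 < a 0 := by simpa [a] using div_pos hpos (hg x le_rfl)
  have htop : Tendsto (fun n : ℕ => g (x + n) * a 0) atTop atTop :=
    (hg_top.comp (tendsto_atTop_add_const_left _ x tendsto_natCast_atTop_atTop)).atTop_mul_const
      ha0
  obtain ⟨n, hn⟩ := (htop.eventually_gt_atTop C).exists
  have hle : g (x + n) * a 0 ≤ f (x + n) :=
    calc g (x + n) * a 0 ≤ g (x + n) * a n :=
          mul_le_mul_of_nonneg_left (ha n.zero_le) (hg _ (hx n)).le
      _ = f (x + n) := mul_div_cancel₀ _ (hg _ (hx n)).ne'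
  linarith [hC _ (hx n)]

lemma sub_quarter_le_gammaHalfRatio_sq {x : ℝ} (hx : 1 / 2 < x) :
    x - 1 / 4 ≤ gammaHalfRatio x ^ 2 := by
  refine sub_nonpos.1 <| nonpos_of_mul_le_mul_add_one
    (f := fun y => y - 1 / 4 - gammaHalfRatio y ^ 2) (g := fun y => gammaHalfRatio y ^ 2)
    (C := 1 / 4) (fun y hy => pow_pos (gammaHalfRatio_pos (by linarith)) 2)
    tendsto_gammaHalfRatio_sq_atTop (fun y hy => ?_)
    (fun y hy => by linarith [sub_half_le_gammaHalfRatio_sq (hx.trans_le hy)])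
  have hy0 : 0 < y := by linarith
  have key : (y - 1 / 4) * ((y + 1 / 2) / y) ^ 2 ≤ y + 3 / 4 := by
    rw [div_pow, mul_div_assoc', div_le_iff₀ (by positivity)]
    nlinarith
  rw [gammaHalfRatio_add_one hy0, mul_pow]
  nlinarith [mul_le_mul_of_nonneg_right key (sq_nonneg (gammaHalfRatio y))]

lemma gammaHalfRatio_sq_le_sub_quarter_add {x : ℝ} (hx : 1 < x) :
    gammaHalfRatio x ^ 2 ≤ x - 1 / 4 + 1 / (16 * (x - 1)) := by
  refine sub_nonpos.1 <| nonpos_of_mul_le_mul_add_one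
    (f := fun y => gammaHalfRatio y ^ 2 - (y - 1 / 4 + 1 / (16 * (y - 1))))
    (g := fun y => gammaHalfRatio y ^ 2) (C := 1 / 4)
    (fun y hy => pow_pos (gammaHalfRatio_pos (by linarith)) 2) tendsto_gammaHalfRatio_sq_atTop
    (fun y hy => ?_) (fun y hy => ?_)
  · have hy1 : 1 < y := by linarith
    have key : y + 3 / 4 + 1 / (16 * y) ≤
        ((y + 1 / 2) / y) ^ 2 * (y - 1 / 4 + 1 / (16 * (y - 1))) := by
      rw [← sub_nonneg]
      have hy1' : 0 < y - 1 := by linarith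
      field_simp
      ring_nf
      positivity
    rw [gammaHalfRatio_add_one (by linarith), mul_pow, add_sub_cancel_right]
    nlinarith [mul_le_mul_of_nonneg_right key (sq_nonneg (gammaHalfRatio y))]
  · have hy1 : 0 < y - 1 := by linarith
    have := gammaHalfRatio_sq_le (by linarith : 0 < y)
    have : 0 < 1 / (16 * (y - 1)) := by positivity
    linarith

lemma tendsto_gammaHalfRatio_sq_sub :
    Tendsto (fun x => gammaHalfRatio x ^ 2 - (x - 1 / 4)) atTop (𝓝 0) := by
  have hupper : Tendsto (fun x : ℝ => 1 / (16 * (x - 1))) atTop (𝓝 0) :=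
    tendsto_const_nhds.div_atTop <| Tendsto.const_mul_atTop (by norm_num) <|
      tendsto_atTop_add_const_right _ (-1) tendsto_id
  refine tendsto_of_tendsto_of_tendsto_of_le_of_le' tendsto_const_nhds hupper ?_ ?_
  · filter_upwards [eventually_gt_atTop (1 / 2)] with x hx
    linarith [sub_quarter_le_gammaHalfRatio_sq hx]
  · filter_upwards [eventually_gt_atTop 1] with x hx
    linarith [gammaHalfRatio_sq_le_sub_quarter_add hx]

lemma gammaHalfRatio_sub_half_div_gammaHalfRatio_half {x : ℝ} (hx : 1 / 2 < x) :
    gammaHalfRatio (x - 1 / 2) / gammaHalfRatio (x / 2) =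
      2 ^ (x - 1) * Gamma (x / 2) ^ 2 / (√π * Gamma (x - 1 / 2)) := by
  have hdup := Gamma_mul_Gamma_add_half (x / 2)
  rw [mul_div_cancel₀ x two_ne_zero] at hdup
  have hpow : (2 : ℝ) ^ (x - 1) * 2 ^ (1 - x) = 1 := by
    rw [← rpow_add two_pos, sub_add_sub_cancel', sub_self, rpow_zero]
  have := Gamma_pos_of_pos (by linarith : 0 < x / 2)
  have := Gamma_pos_of_pos (by linarith : 0 < x - 1 / 2)
  have := Gamma_pos_of_pos (by linarith : 0 < x / 2 + 1 / 2)
  rw [gammaHalfRatio, gammaHalfRatio, sub_add_cancel, div_div_div_eq,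
    div_eq_div_iff (by positivity) (by positivity)]
  linear_combination (-(2 ^ (x - 1) * Gamma (x / 2) * Gamma (x - 1 / 2))) * hdup -
    (Gamma x * Gamma (x / 2) * √π * Gamma (x - 1 / 2)) * hpow

lemma tendsto_mul_sqrt_two_sub_div {s t : ℕ → ℝ} (hs : ∀ᶠ n in atTop, 0 ≤ s n)
    (ht : ∀ᶠ n in atTop, 0 < t n)
    (hs2 : Tendsto (fun n => s n ^ 2 - (n - 3 / 4)) atTop (𝓝 0))
    (ht2 : Tendsto (fun n => t n ^ 2 - (n / 2 - 1 / 4)) atTop (𝓝 0)) :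
    Tendsto (fun n : ℕ => (n : ℝ) * (√2 - s n / t n)) atTop (𝓝 (√2 / 8)) := by
  have hinv := tendsto_inv_atTop_nhds_zero_nat (𝕜 := ℝ)
  have hn : ∀ᶠ n : ℕ in atTop, (n : ℝ) ≠ 0 :=
    (eventually_ne_atTop 0).mono fun n hn => Nat.cast_ne_zero.2 hn
  have hE : Tendsto (fun n => 2 * t n ^ 2 - s n ^ 2) atTop (𝓝 (1 / 4)) := by
    have h := ((ht2.const_mul 2).sub hs2).add_const (1 / 4)
    rw [mul_zero, sub_zero, zero_add] at h
    exact h.congr fun n => by ring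
  have hT : Tendsto (fun n : ℕ => (n : ℝ) / t n ^ 2) atTop (𝓝 2) := by
    have h := ((ht2.mul hinv).add_const (1 / 2)).sub (hinv.const_mul (1 / 4))
    rw [zero_mul, zero_add, mul_zero, sub_zero] at h
    have h' := h.inv₀ (by norm_num)
    simp only [one_div, inv_inv] at h'
    refine h'.congr' ?_
    filter_upwards [hn] with n hn
    field_simp
    ring
  have hq : Tendsto (fun n => s n / t n) atTop (𝓝 √2) := by
    have h := (tendsto_const_nhds (x := (2 : ℝ))).sub ((hE.mul hT).mul hinv)
    rw [mul_zero, sub_zero] at h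
    refine h.sqrt.congr' ?_
    filter_upwards [hs, ht, hn] with n hs ht hn
    rw [← sqrt_sq (div_nonneg hs ht.le)]
    congr 1
    field_simp
    ring
  have hlim : √2 / 8 = 2 * (1 / 4) / (√2 + √2) := by
    field_simp
    rw [sq_sqrt zero_le_two]
    ring
  rw [hlim]
  refine ((hT.mul hE).div (tendsto_const_nhds.add hq) (by positivity)).congr' ?_
  filter_upwards [hs, ht] with n hs ht
  -- `√2 - s / t = (2 t² - s²) / (t² (√2 + s / t))`
  change (n : ℝ) / t n ^ 2 * (2 * t n ^ 2 - s n ^ 2) / (√2 + s n / t n) = n * (√2 - s n / t n)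
  rw [div_eq_iff (by positivity)]
  field_simp
  linear_combination -(n : ℝ) * t n ^ 2 * sq_sqrt (zero_le_two (α := ℝ))

/-- Refined asymptotic `ξ_μ(d) = √2 (1 − 1/(8d) + o(1/d))` for the mean
distance `ξ_μ(d) = 2^{d−1} (Γ(d/2))² / (√π · Γ(d − 1/2))` between two independent uniform
random points on the unit sphere `S^{d−1} ⊂ ℝ^d`:
`lim_{d→∞} d · (√2 − ξ_μ(d)) = √2 / 8`, the limit taken over integers `d → ∞`. -/
theorem mean_distance_refined_asymptotic :
    Tendsto
      (fun d : ℕ =>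
        (d : ℝ) *
          (Real.sqrt 2 -
            (2 : ℝ) ^ ((d : ℝ) - 1) * Real.Gamma ((d : ℝ) / 2) ^ 2
              / (Real.sqrt π * Real.Gamma ((d : ℝ) - 1 / 2))))
      atTop (nhds (Real.sqrt 2 / 8)) := by
  have hsub : Tendsto (fun n : ℕ => (n : ℝ) - 1 / 2) atTop atTop :=
    tendsto_atTop_add_const_right _ _ tendsto_natCast_atTop_atTop
  have hhalf : Tendsto (fun n : ℕ => (n : ℝ) / 2) atTop atTop :=
    tendsto_natCast_atTop_atTop.atTop_div_const two_pos
  have hone : ∀ᶠ n : ℕ in atTop, (1 : ℝ) ≤ n :=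
    (eventually_ge_atTop 1).mono fun n hn => Nat.one_le_cast.2 hn
  refine (tendsto_mul_sqrt_two_sub_div (s := fun n => gammaHalfRatio (n - 1 / 2))
    (t := fun n => gammaHalfRatio (n / 2))
    (hone.mono fun n hn => (gammaHalfRatio_pos (by linarith)).le)
    (hone.mono fun n hn => gammaHalfRatio_pos (by linarith))
    ((tendsto_gammaHalfRatio_sq_sub.comp hsub).congr fun n => by
      simp only [Function.comp_apply]; ring)
    (tendsto_gammaHalfRatio_sq_sub.comp hhalf)).congr' ?_
  filter_upwards [hone] with n hn
  rw [gammaHalfRatio_sub_half_div_gammaHalfRatio_half (by linarith)]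
end

section
/- The standard deviation of the distance between two independent uniform random points on the unit sphere decays like 1/√(2d): writing ξ_μ(d) = 2^{d−1} (Γ(d/2))² / (√π · Γ(d − 1/2)) and ξ_σ(d) = √(2 − ξ_μ(d)²), one has lim_{d→∞} √(2d) · ξ_σ(d) = 1, where the limit is taken over integers d → ∞. -/
/-!
Write `G(x) = (Γ(x + 1/2) / Γ(x))²`. Legendre's duplication formula turns the mean distance into
`ξ_μ(d)² = G(d - 1/2) / G(d/2)`, so the theorem reduces to the second-order asymptotic
`G(x) = x - 1/4 + o(1)`. Log-convexity of `Γ` gives `x - 1/2 ≤ G(x) ≤ x`, hence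
`G(x) / (x + c) → 1` for every `c`. Since `G(x + 1) = G(x) (x + 1/2)² / x²`, the step
`G(x + 1) / (x + 1 + c) - G(x) / (x + c)` has the sign of `(c + 1/4) x + c/4`: for `c = -1/4` the
sequence `n ↦ G(x + n) / (x + n + c)` decreases to `1`, and for `c = -1/4 + ε` it eventually
increases to `1`, which traps `G(x)` between `x - 1/4` and `x - 1/4 + ε`. Finally
`2d (2 - ξ_μ(d)²) = (2 G(d/2) - G(d - 1/2)) · 2d / G(d/2) → 1/4 · 4 = 1`.
-/

open Real Filter Topology Asymptotics

noncomputable def gammaRatioSq (x : ℝ) : ℝ := (Gamma (x + 1 / 2) / Gamma x) ^ 2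

lemma gammaRatioSq_pos {x : ℝ} (hx : 0 < x) : 0 < gammaRatioSq x := by
  have := Gamma_pos_of_pos hx
  have := Gamma_pos_of_pos (by positivity : 0 < x + 1 / 2)
  unfold gammaRatioSq
  positivity

lemma gammaRatioSq_add_one {x : ℝ} (hx : 0 < x) :
    gammaRatioSq (x + 1) = gammaRatioSq x * ((x + 1 / 2) / x) ^ 2 := by
  have := (Gamma_pos_of_pos hx).ne'
  unfold gammaRatioSq
  rw [add_right_comm, Gamma_add_one (by positivity), Gamma_add_one hx.ne']
  field_simp

lemma Gamma_add_half_sq_le {x : ℝ} (hx : 0 < x) :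
    Gamma (x + 1 / 2) ^ 2 ≤ Gamma x * Gamma (x + 1) := by
  have h := Gamma_mul_add_mul_le_rpow_Gamma_mul_rpow_Gamma hx (by positivity : 0 < x + 1)
    one_half_pos one_half_pos (add_halves 1)
  rw [show 1 / 2 * x + 1 / 2 * (x + 1) = x + 1 / 2 by ring,
    ← mul_rpow (Gamma_pos_of_pos hx).le (Gamma_pos_of_pos (by positivity)).le,
    ← sqrt_eq_rpow] at h
  exact (le_sqrt (Gamma_pos_of_pos (by positivity)).le (by positivity)).1 h

lemma gammaRatioSq_le {x : ℝ} (hx : 0 < x) : gammaRatioSq x ≤ x := by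
  have h := Gamma_add_half_sq_le hx
  rw [Gamma_add_one hx.ne'] at h
  rw [gammaRatioSq, div_pow, div_le_iff₀ (by have := Gamma_pos_of_pos hx; positivity)]
  linarith

lemma sub_half_le_gammaRatioSq {x : ℝ} (hx : 0 < x) : x - 1 / 2 ≤ gammaRatioSq x := by
  have h := Gamma_add_half_sq_le (by positivity : 0 < x + 1 / 2)
  rw [add_assoc, add_halves, Gamma_add_one hx.ne', Gamma_add_one (by positivity)] at h
  rw [gammaRatioSq, div_pow, le_div_iff₀ (by have := Gamma_pos_of_pos hx; positivity)]
  refine le_of_mul_le_mul_left ?_ (by positivity : 0 < x + 1 / 2)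
  nlinarith [sq_nonneg (Gamma x)]

lemma isEquivalent_gammaRatioSq (c : ℝ) : gammaRatioSq ~[atTop] fun x => x + c := by
  have hbdd : (fun x => gammaRatioSq x - (x + c)) =O[atTop] fun _ => (1 : ℝ) := by
    refine IsBigO.of_bound (1 / 2 + |c|) ?_
    filter_upwards [eventually_gt_atTop 0] with x hx
    have := gammaRatioSq_le hx
    have := sub_half_le_gammaRatioSq hx
    rw [norm_one, mul_one, norm_eq_abs, abs_le]
    constructor <;> cases abs_cases c <;> linarith
  exact hbdd.trans_isLittleO ((isLittleO_one_left_iff ℝ).2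
    (tendsto_norm_atTop_atTop.comp (tendsto_atTop_add_const_right _ c tendsto_id)))

lemma tendsto_gammaRatioSq_div_add (c : ℝ) :
    Tendsto (fun x => gammaRatioSq x / (x + c)) atTop (𝓝 1) :=
  (isEquivalent_iff_tendsto_one
    ((tendsto_atTop_add_const_right _ c tendsto_id).eventually_ne_atTop 0)).1
    (isEquivalent_gammaRatioSq c)

lemma gammaRatioSq_add_one_div_sub {x c : ℝ} (hx : 0 < x) (hxc : x + c ≠ 0)
    (hxc' : x + 1 + c ≠ 0) :
    gammaRatioSq (x + 1) / (x + 1 + c) - gammaRatioSq x / (x + c)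
      = gammaRatioSq x * ((1 / 4 + c) * x + c / 4) / (x ^ 2 * (x + c) * (x + 1 + c)) := by
  rw [gammaRatioSq_add_one hx]
  field_simp
  ring

lemma tendsto_gammaRatioSq_add_nat_div (x c : ℝ) :
    Tendsto (fun n : ℕ => gammaRatioSq (x + n) / (x + n + c)) atTop (𝓝 1) :=
  (tendsto_gammaRatioSq_div_add c).comp
    (tendsto_atTop_add_const_left _ x tendsto_natCast_atTop_atTop)

lemma sub_quarter_le_gammaRatioSq {x : ℝ} (hx : 1 / 4 < x) : x - 1 / 4 ≤ gammaRatioSq x := by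
  have hanti : Antitone fun n : ℕ => gammaRatioSq (x + n) / (x + n + -(1 / 4)) := by
    refine antitone_nat_of_succ_le fun n => sub_nonpos.1 ?_
    have hn : 1 / 4 < x + n := by linarith [n.cast_nonneg (α := ℝ)]
    push_cast
    rw [← add_assoc, gammaRatioSq_add_one_div_sub (by positivity) (by linarith) (by linarith)]
    refine div_nonpos_of_nonpos_of_nonneg ?_ ?_
    · nlinarith [gammaRatioSq_pos (by positivity : 0 < x + n)]
    · have : 0 < x + n + -(1 / 4) := by linarith
      have : 0 < x + n + 1 + -(1 / 4) := by linarith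
      positivity
  have h := hanti.le_of_tendsto (tendsto_gammaRatioSq_add_nat_div x _) 0
  rw [Nat.cast_zero, add_zero, le_div_iff₀ (by linarith), one_mul] at h
  linarith

lemma eventually_gammaRatioSq_le {ε : ℝ} (hε : 0 < ε) :
    ∀ᶠ x in atTop, gammaRatioSq x ≤ x - 1 / 4 + ε := by
  filter_upwards [eventually_ge_atTop (max 1 (1 / (16 * ε)))] with x hx
  have hx1 : 1 ≤ x := le_of_max_le_left hx
  have hxε : 1 / 16 ≤ ε * x := by
    have := le_of_max_le_right hx
    rw [div_le_iff₀ (by positivity)] at this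
    linarith
  have hmono : Monotone fun n : ℕ => gammaRatioSq (x + n) / (x + n + (ε - 1 / 4)) := by
    refine monotone_nat_of_le_succ fun n => sub_nonneg.1 ?_
    have hn : 1 ≤ x + n := by linarith [n.cast_nonneg (α := ℝ)]
    push_cast
    rw [← add_assoc, gammaRatioSq_add_one_div_sub (by positivity) (by linarith) (by linarith)]
    refine div_nonneg ?_ ?_
    · have := gammaRatioSq_pos (by positivity : 0 < x + n)
      have : 0 ≤ ε * n := by positivity
      nlinarith
    · have : 0 < x + n + (ε - 1 / 4) := by linarith
      have : 0 < x + n + 1 + (ε - 1 / 4) := by linarith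
      positivity
  have h := hmono.ge_of_tendsto (tendsto_gammaRatioSq_add_nat_div x _) 0
  rw [Nat.cast_zero, add_zero, div_le_iff₀ (by linarith), one_mul] at h
  linarith

theorem tendsto_gammaRatioSq_sub : Tendsto (fun x => gammaRatioSq x - x) atTop (𝓝 (-1 / 4)) := by
  refine tendsto_order.2 ⟨fun a ha => ?_, fun a ha => ?_⟩
  · filter_upwards [eventually_gt_atTop (1 / 4)] with x hx
    linarith [sub_quarter_le_gammaRatioSq hx]
  · filter_upwards [eventually_gammaRatioSq_le (by linarith : 0 < (a + 1 / 4) / 2)] with x hx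
    linarith

noncomputable def sphereMeanDistance (d : ℝ) : ℝ :=
  2 ^ (d - 1) * Gamma (d / 2) ^ 2 / (√π * Gamma (d - 1 / 2))

lemma sphereMeanDistance_sq {d : ℝ} (hd : 1 / 2 < d) :
    sphereMeanDistance d ^ 2 = gammaRatioSq (d - 1 / 2) / gammaRatioSq (d / 2) := by
  have hdup := Gamma_mul_Gamma_add_half (d / 2)
  rw [mul_div_cancel₀ d two_ne_zero] at hdup
  have hpow : (2 : ℝ) ^ (d - 1) * 2 ^ (1 - d) = 1 := by
    rw [← rpow_add two_pos, sub_add_sub_cancel', sub_self, rpow_zero]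
  have := (Gamma_pos_of_pos (by linarith : 0 < d / 2)).ne'
  have := (Gamma_pos_of_pos (by linarith : 0 < d / 2 + 1 / 2)).ne'
  have := (Gamma_pos_of_pos (by linarith : 0 < d - 1 / 2)).ne'
  have := (sqrt_pos.2 pi_pos).ne'
  rw [sphereMeanDistance, gammaRatioSq, gammaRatioSq, sub_add_cancel, ← div_pow]
  congr 1
  generalize Gamma (d / 2) = a, Gamma (d / 2 + 1 / 2) = b, Gamma (d - 1 / 2) = c at *
  field_simp
  linear_combination (2 : ℝ) ^ (d - 1) * hdup + Gamma d * √π * hpow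

lemma tendsto_two_mul_two_sub_sphereMeanDistance_sq :
    Tendsto (fun d => 2 * d * (2 - sphereMeanDistance d ^ 2)) atTop (𝓝 1) := by
  have hhalf : Tendsto (fun d : ℝ => d / 2) atTop atTop := tendsto_id.atTop_div_const two_pos
  have hshift : Tendsto (fun d : ℝ => d - 1 / 2) atTop atTop :=
    tendsto_atTop_add_const_right _ _ tendsto_id
  have hnum : Tendsto (fun d => 2 * (gammaRatioSq (d / 2) - d / 2)
      - (gammaRatioSq (d - 1 / 2) - (d - 1 / 2)) + 1 / 2) atTop (𝓝 (1 / 4)) := by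
    convert (((tendsto_gammaRatioSq_sub.comp hhalf).const_mul 2).sub
      (tendsto_gammaRatioSq_sub.comp hshift)).add_const (1 / 2) using 2 <;> norm_num
  have hden := ((tendsto_gammaRatioSq_div_add 0).comp hhalf).inv₀ one_ne_zero
  have h := hnum.mul (hden.const_mul 4)
  rw [show (1 / 4 : ℝ) * (4 * 1⁻¹) = 1 by norm_num] at h
  refine h.congr' ?_
  filter_upwards [eventually_gt_atTop (1 / 2)] with d hd
  have := (gammaRatioSq_pos (by linarith : 0 < d / 2)).ne'
  simp only [Function.comp_def, add_zero]
  rw [sphereMeanDistance_sq hd]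
  field_simp
  ring

/-- With `ξ_μ(d) = 2^{d−1} (Γ(d/2))² / (√π · Γ(d − 1/2))` the mean distance
between two independent uniform random points on the unit sphere `S^{d−1} ⊂ ℝ^d`, and
`ξ_σ(d) = √(2 − ξ_μ(d)²)` the standard deviation of that distance, one has
`lim_{d→∞} √(2d) · ξ_σ(d) = 1`, the limit taken over integers `d → ∞`. -/
theorem distance_stddev_asymptotic :
    Tendsto
      (fun d : ℕ =>
        Real.sqrt (2 * d) *
          Real.sqrt (2 -
            ((2 : ℝ) ^ ((d : ℝ) - 1) * Real.Gamma ((d : ℝ) / 2) ^ 2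
              / (Real.sqrt π * Real.Gamma ((d : ℝ) - 1 / 2))) ^ 2))
      atTop (nhds 1) := by
  have h := (tendsto_two_mul_two_sub_sphereMeanDistance_sq.comp
    tendsto_natCast_atTop_atTop).sqrt
  rw [sqrt_one] at h
  refine h.congr fun d => ?_
  rw [Function.comp_apply, sqrt_mul (by positivity)]
  rfl
end

section
/- Let d ≥ 1 be an integer and r > 0. If X and Y are independent random points, each distributed according to the uniform probability measure σ on the sphere S_r^{d-1}, then for every t > 0, P(|‖X − Y‖² − 2r²| ≥ t) ≤ 4r⁴ / (d t²). In particular, for each fixed t > 0 this probability tends to 0 as d → ∞. -/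
/-!
On the sphere `‖x - y‖ ^ 2 - 2 r ^ 2 = -2 ⟪x, y⟫`, so by Markov's inequality applied to
`⟪X, Y⟫ ^ 2` it suffices to show `E ⟪X, Y⟫ ^ 2 = r ^ 4 / d`. A reflection maps any vector to any
other vector of the same norm, so by rotation invariance `∫ ⟪x, u⟫ ^ 2 dσ(x)` depends only on
`‖u‖`; summing over an orthonormal basis and using Parseval gives
`d * ∫ ⟪x, y⟫ ^ 2 dσ(x) = ‖y‖ ^ 2 * r ^ 2`.
-/

open MeasureTheory Filter Module
open scoped RealInnerProductSpace

section RotationInvariant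

variable {E : Type*} [NormedAddCommGroup E] [InnerProductSpace ℝ E] [MeasurableSpace E]
  [BorelSpace E] {μ : Measure E}

theorem integral_inner_sq_eq_of_norm_eq (hinv : ∀ A : E ≃ₗᵢ[ℝ] E, μ.map A = μ) {u v : E}
    (h : ‖u‖ = ‖v‖) : ∫ x, ⟪x, u⟫ ^ 2 ∂μ = ∫ x, ⟪x, v⟫ ^ 2 ∂μ := by
  set A := Submodule.reflection (ℝ ∙ (u - v))ᗮ
  have hAu : A u = v := Submodule.reflection_sub h
  calc ∫ x, ⟪x, u⟫ ^ 2 ∂μ = ∫ x, ⟪A x, v⟫ ^ 2 ∂μ := by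
        simp_rw [← hAu, A.inner_map_map]
    _ = ∫ x, ⟪x, v⟫ ^ 2 ∂(μ.map A) :=
        (integral_map A.continuous.aemeasurable
          (by fun_prop : Continuous fun x => ⟪x, v⟫ ^ 2).aestronglyMeasurable).symm
    _ = ∫ x, ⟪x, v⟫ ^ 2 ∂μ := by rw [hinv A]

theorem integrable_inner_sq (hμ : Integrable (fun x => ‖x‖ ^ 2) μ) (y : E) :
    Integrable (fun x => ⟪x, y⟫ ^ 2) μ := by
  refine (hμ.mul_const (‖y‖ ^ 2)).mono'
    (by fun_prop : Continuous fun x => ⟪x, y⟫ ^ 2).aestronglyMeasurable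
    (Eventually.of_forall fun x => ?_)
  rw [Real.norm_eq_abs, abs_sq, ← sq_abs, ← mul_pow]
  exact pow_le_pow_left₀ (abs_nonneg _) (abs_real_inner_le_norm x y) 2

variable [FiniteDimensional ℝ E]

theorem finrank_mul_integral_inner_sq (hinv : ∀ A : E ≃ₗᵢ[ℝ] E, μ.map A = μ)
    (hμ : Integrable (fun x => ‖x‖ ^ 2) μ) (y : E) :
    finrank ℝ E * ∫ x, ⟪x, y⟫ ^ 2 ∂μ = ‖y‖ ^ 2 * ∫ x, ‖x‖ ^ 2 ∂μ := by
  set b := stdOrthonormalBasis ℝ E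
  have hb : ∀ i, ∫ x, ⟪x, y⟫ ^ 2 ∂μ = ‖y‖ ^ 2 * ∫ x, ⟪x, b i⟫ ^ 2 ∂μ := fun i => by
    rw [integral_inner_sq_eq_of_norm_eq hinv (v := ‖y‖ • b i) (by simp [norm_smul]),
      ← integral_const_mul]
    simp_rw [real_inner_smul_right, mul_pow]
  calc finrank ℝ E * ∫ x, ⟪x, y⟫ ^ 2 ∂μ = ∑ i, ‖y‖ ^ 2 * ∫ x, ⟪x, b i⟫ ^ 2 ∂μ := by
        rw [Finset.sum_congr rfl fun i _ => (hb i).symm, Finset.sum_const, Finset.card_univ,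
          Fintype.card_fin, nsmul_eq_mul]
    _ = ‖y‖ ^ 2 * ∫ x, ‖x‖ ^ 2 ∂μ := by
        rw [← Finset.mul_sum, ← integral_finsetSum _ fun i _ => integrable_inner_sq hμ (b i)]
        simp_rw [b.sum_sq_inner_left]

theorem finrank_mul_integral_inner_sq_prod [IsProbabilityMeasure μ]
    (hinv : ∀ A : E ≃ₗᵢ[ℝ] E, μ.map A = μ) {r : ℝ} (hr : ∀ᵐ x ∂μ, ‖x‖ = r) :
    Integrable (fun p : E × E => ⟪p.1, p.2⟫ ^ 2) (μ.prod μ) ∧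
      finrank ℝ E * ∫ p : E × E, ⟪p.1, p.2⟫ ^ 2 ∂(μ.prod μ) = r ^ 4 := by
  have hsq : ∫ x, ‖x‖ ^ 2 ∂μ = r ^ 2 := by
    rw [integral_congr_ae (hr.mono fun x hx => by rw [hx]), integral_const, probReal_univ,
      one_smul]
  have hμ : Integrable (fun x => ‖x‖ ^ 2) μ :=
    (integrable_const (r ^ 2)).congr (hr.mono fun x hx => by simp [hx])
  have hint : Integrable (fun p : E × E => ⟪p.1, p.2⟫ ^ 2) (μ.prod μ) := by
    refine (hμ.mul_prod hμ).mono'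
      (by fun_prop : Continuous fun p : E × E => ⟪p.1, p.2⟫ ^ 2).aestronglyMeasurable
      (Eventually.of_forall fun p => ?_)
    rw [Real.norm_eq_abs, abs_sq, ← sq_abs, ← mul_pow]
    exact pow_le_pow_left₀ (abs_nonneg _) (abs_real_inner_le_norm p.1 p.2) 2
  refine ⟨hint, ?_⟩
  calc finrank ℝ E * ∫ p : E × E, ⟪p.1, p.2⟫ ^ 2 ∂(μ.prod μ)
      = ∫ x, finrank ℝ E * ∫ y, ⟪y, x⟫ ^ 2 ∂μ ∂μ := by
        simp_rw [integral_prod _ hint, integral_const_mul, real_inner_comm]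
    _ = ∫ x, ‖x‖ ^ 2 * r ^ 2 ∂μ := by
        simp_rw [finrank_mul_integral_inner_sq hinv hμ, hsq]
    _ = r ^ 4 := by rw [integral_mul_const, hsq]; ring

theorem measure_prod_abs_norm_sub_sq_sub_ge_le [IsProbabilityMeasure μ]
    (hinv : ∀ A : E ≃ₗᵢ[ℝ] E, μ.map A = μ) {r : ℝ} (hr : ∀ᵐ x ∂μ, ‖x‖ = r)
    (hE : 0 < finrank ℝ E) {t : ℝ} (ht : 0 < t) :
    (μ.prod μ) {p : E × E | t ≤ |‖p.1 - p.2‖ ^ 2 - 2 * r ^ 2|}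
      ≤ ENNReal.ofReal (4 * r ^ 4 / (finrank ℝ E * t ^ 2)) := by
  obtain ⟨hint, hI⟩ := finrank_mul_integral_inner_sq_prod hinv hr
  have hr₂ : ∀ᵐ p ∂(μ.prod μ), ‖p.1‖ = r ∧ ‖p.2‖ = r :=
    (Measure.quasiMeasurePreserving_fst.ae hr).and (Measure.quasiMeasurePreserving_snd.ae hr)
  have hsub : {p : E × E | t ≤ |‖p.1 - p.2‖ ^ 2 - 2 * r ^ 2|}
      ≤ᵐ[μ.prod μ] {p | t ^ 2 / 4 ≤ ⟪p.1, p.2⟫ ^ 2} := by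
    filter_upwards [hr₂] with p ⟨h₁, h₂⟩ (hp : t ≤ _)
    rw [norm_sub_sq_real, h₁, h₂, show ∀ a : ℝ, r ^ 2 - 2 * a + r ^ 2 - 2 * r ^ 2 = -(2 * a)
      from fun a => by ring, abs_neg, abs_mul, abs_two] at hp
    show t ^ 2 / 4 ≤ _
    nlinarith [sq_abs ⟪p.1, p.2⟫]
  have markov := mul_meas_ge_le_integral_of_nonneg
    (Eventually.of_forall fun p : E × E => sq_nonneg ⟪p.1, p.2⟫) hint (t ^ 2 / 4)
  refine (measure_mono_ae hsub).trans ((ENNReal.le_ofReal_iff_toReal_le (measure_ne_top _ _)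
    (by positivity)).2 ?_)
  rw [← measureReal_def, le_div_iff₀ (by positivity)]
  nlinarith

end RotationInvariant

theorem sphere_uniform_sq_distance_concentration_general (r : ℝ)
    (σ : ∀ d : ℕ, Measure (EuclideanSpace ℝ (Fin d)))
    (hprob : ∀ d, 1 ≤ d → IsProbabilityMeasure (σ d))
    (hsupp : ∀ d, 1 ≤ d → σ d (Metric.sphere (0 : EuclideanSpace ℝ (Fin d)) r)ᶜ = 0)
    (hinv : ∀ d, 1 ≤ d → ∀ A : EuclideanSpace ℝ (Fin d) ≃ₗᵢ[ℝ] EuclideanSpace ℝ (Fin d),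
      Measure.map A (σ d) = σ d) :
    (∀ d, 1 ≤ d → ∀ t : ℝ, 0 < t →
        ((σ d).prod (σ d))
            {p : EuclideanSpace ℝ (Fin d) × EuclideanSpace ℝ (Fin d) |
              t ≤ |‖p.1 - p.2‖ ^ 2 - 2 * r ^ 2|}
          ≤ ENNReal.ofReal (4 * r ^ 4 / (d * t ^ 2))) ∧
      ∀ t : ℝ, 0 < t →
        Tendsto
          (fun d : ℕ =>
            ((σ d).prod (σ d))
              {p : EuclideanSpace ℝ (Fin d) × EuclideanSpace ℝ (Fin d) |
                t ≤ |‖p.1 - p.2‖ ^ 2 - 2 * r ^ 2|})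
          atTop (nhds 0) := by
  have bound : ∀ d, 1 ≤ d → ∀ t : ℝ, 0 < t →
      ((σ d).prod (σ d)) {p : EuclideanSpace ℝ (Fin d) × EuclideanSpace ℝ (Fin d) |
        t ≤ |‖p.1 - p.2‖ ^ 2 - 2 * r ^ 2|} ≤ ENNReal.ofReal (4 * r ^ 4 / (d * t ^ 2)) := by
    intro d hd t ht
    have := hprob d hd
    have hr : ∀ᵐ x ∂(σ d), ‖x‖ = r := by
      filter_upwards [mem_ae_iff.2 (hsupp d hd)] with x hx using mem_sphere_zero_iff_norm.1 hx
    simpa using measure_prod_abs_norm_sub_sq_sub_ge_le (hinv d hd) hr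
      (by rwa [finrank_euclideanSpace_fin]) ht
  refine ⟨bound, fun t ht => ?_⟩
  have hlim : Tendsto (fun d : ℕ => ENNReal.ofReal (4 * r ^ 4 / t ^ 2 / d)) atTop (nhds 0) := by
    simpa using ENNReal.tendsto_ofReal (tendsto_const_div_atTop_nhds_zero_nat _)
  refine tendsto_of_tendsto_of_tendsto_of_le_of_le' tendsto_const_nhds hlim
    (Eventually.of_forall fun _ => zero_le) ?_
  filter_upwards [eventually_ge_atTop 1] with d hd
  simpa only [div_div, mul_comm (t ^ 2)] using bound d hd t ht

/-- For each `d ≥ 1` and `r > 0`, let `σ d` be the uniform probability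
measure on the sphere `S_r^{d-1} ⊂ ℝ^d` (formalized as: a rotation-invariant probability
measure concentrated on the sphere — these properties characterize it uniquely). If `X` and
`Y` are independent, each with law `σ d` (so that the joint law is `σ d × σ d`), then for
every `t > 0`, `P(|‖X − Y‖² − 2r²| ≥ t) ≤ 4r⁴ / (d t²)`; in particular, for each fixed
`t > 0` this probability tends to `0` as `d → ∞`. -/
theorem sphere_uniform_sq_distance_concentration (r : ℝ) (hr : 0 < r)
    (σ : ∀ d : ℕ, Measure (EuclideanSpace ℝ (Fin d)))
    (hprob : ∀ d, 1 ≤ d → IsProbabilityMeasure (σ d))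
    (hsupp : ∀ d, 1 ≤ d → σ d (Metric.sphere (0 : EuclideanSpace ℝ (Fin d)) r)ᶜ = 0)
    (hinv : ∀ d, 1 ≤ d → ∀ A : EuclideanSpace ℝ (Fin d) ≃ₗᵢ[ℝ] EuclideanSpace ℝ (Fin d),
      Measure.map A (σ d) = σ d) :
    (∀ d, 1 ≤ d → ∀ t : ℝ, 0 < t →
        ((σ d).prod (σ d))
            {p : EuclideanSpace ℝ (Fin d) × EuclideanSpace ℝ (Fin d) |
              t ≤ |‖p.1 - p.2‖ ^ 2 - 2 * r ^ 2|}
          ≤ ENNReal.ofReal (4 * r ^ 4 / (d * t ^ 2))) ∧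
      ∀ t : ℝ, 0 < t →
        Tendsto
          (fun d : ℕ =>
            ((σ d).prod (σ d))
              {p : EuclideanSpace ℝ (Fin d) × EuclideanSpace ℝ (Fin d) |
                t ≤ |‖p.1 - p.2‖ ^ 2 - 2 * r ^ 2|})
          atTop (nhds 0) :=
  sphere_uniform_sq_distance_concentration_general r σ hprob hsupp hinv
end

section
/- Probabilistic form of Corollary 1: let d ≥ 1, n ≥ 1, r > 0, and let X_1,…,X_n, X'_1,…,X'_n be 2n independent random points, each distributed according to the uniform probability measure on the sphere S_r^{d−1} ⊂ ℝ^d. Write Z = (X_1,…,X_n), Z' = (X'_1,…,X'_n) and W₂²(Z, Z') = min over doubly stochastic n×n matrices ω of ∑_{i,j} ω_{ij} ‖X_i − X'_j‖². Then for every t > 0, P(|W₂²(Z, Z') − 2nr²| > nt) ≤ 4 n² r⁴ / (d t²). In particular, for fixed n, r, t this probability tends to 0 as d → ∞, so W₂(Z, Z') converges in probability to √(2n)·r. -/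
open MeasureTheory ProbabilityTheory Finset Filter

/-- An `n × n` real matrix is doubly stochastic if all its entries are nonnegative and every
row sum and every column sum equals 1. -/
def DoublyStochastic {n : ℕ} (ω : Matrix (Fin n) (Fin n) ℝ) : Prop :=
  (∀ i j, 0 ≤ ω i j) ∧ (∀ i, ∑ j, ω i j = 1) ∧ (∀ j, ∑ i, ω i j = 1)

/-- The squared 2-Wasserstein distance between the empirical point sets of the tuples
`z = (z_1, …, z_n)` and `z' = (z'_1, …, z'_n)` in `ℝ^d`:
`W₂²(Z, Z') = min_{ω doubly stochastic} ∑_{i,j} ω_{ij} ‖z_i − z'_j‖²`. -/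
noncomputable def W2sq {n d : ℕ} (z z' : Fin n → EuclideanSpace ℝ (Fin d)) : ℝ :=
  sInf {c : ℝ | ∃ ω : Matrix (Fin n) (Fin n) ℝ, DoublyStochastic ω ∧
    c = ∑ i, ∑ j, ω i j * ‖z i - z' j‖ ^ 2}

section Det
variable {n d : ℕ}

lemma unif_DS (hn : 1 ≤ n) : DoublyStochastic (fun _ _ : Fin n => (n : ℝ)⁻¹) := by
  have hn' : (n : ℝ) ≠ 0 := by positivity
  refine ⟨fun i j => by positivity, fun i => ?_, fun j => ?_⟩ <;>
    simp [Finset.sum_const, mul_inv_cancel₀ hn']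

lemma W2sq_set_nonempty (hn : 1 ≤ n) (z z' : Fin n → EuclideanSpace ℝ (Fin d)) :
    Set.Nonempty {c : ℝ | ∃ ω : Matrix (Fin n) (Fin n) ℝ, DoublyStochastic ω ∧
      c = ∑ i, ∑ j, ω i j * ‖z i - z' j‖ ^ 2} :=
  ⟨_, (fun _ _ => (n : ℝ)⁻¹), unif_DS hn, rfl⟩

lemma W2sq_nonneg (hn : 1 ≤ n) (z z' : Fin n → EuclideanSpace ℝ (Fin d)) :
    0 ≤ W2sq z z' := by
  refine le_csInf (W2sq_set_nonempty hn z z') ?_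
  rintro c ⟨ω, hω, rfl⟩
  refine Finset.sum_nonneg fun i _ => Finset.sum_nonneg fun j _ => ?_
  exact mul_nonneg (hω.1 i j) (by positivity)

lemma key_sum (z z' : Fin n → EuclideanSpace ℝ (Fin d)) {r : ℝ}
    (hz : ∀ i, ‖z i‖ = r) (hz' : ∀ i, ‖z' i‖ = r)
    {ω : Matrix (Fin n) (Fin n) ℝ} (hω : DoublyStochastic ω) :
    ∑ i, ∑ j, ω i j * ‖z i - z' j‖ ^ 2
      = 2 * n * r ^ 2 - 2 * ∑ i, ∑ j, ω i j * (inner ℝ (z i) (z' j) : ℝ) := by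
  have h1 : ∀ i j, ‖z i - z' j‖ ^ 2 = 2 * r ^ 2 - 2 * (inner ℝ (z i) (z' j) : ℝ) := by
    intro i j
    rw [norm_sub_sq_real, hz, hz']
    ring
  have h2 : ∑ i, ∑ j, ω i j * ‖z i - z' j‖ ^ 2
      = ∑ i, ∑ j, (ω i j * (2 * r ^ 2) - 2 * (ω i j * (inner ℝ (z i) (z' j) : ℝ))) := by
    refine Finset.sum_congr rfl fun i _ => Finset.sum_congr rfl fun j _ => ?_
    rw [h1]; ring
  rw [h2]
  simp only [Finset.sum_sub_distrib, ← Finset.mul_sum, ← Finset.sum_mul]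
  have h3 : ∑ i, ∑ j, ω i j = (n : ℝ) := by
    simp [hω.2.1]
  rw [h3]
  ring

lemma W2sq_abs_le (hn : 1 ≤ n) {r : ℝ} (z z' : Fin n → EuclideanSpace ℝ (Fin d))
    (hz : ∀ i, ‖z i‖ = r) (hz' : ∀ i, ‖z' i‖ = r) :
    |W2sq z z' - 2 * n * r ^ 2| ≤ 2 * ∑ i, ∑ j, |(inner ℝ (z i) (z' j) : ℝ)| := by
  set T : ℝ := ∑ i, ∑ j, |(inner ℝ (z i) (z' j) : ℝ)| with hT
  have hbound : ∀ ω : Matrix (Fin n) (Fin n) ℝ, DoublyStochastic ω →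
      |∑ i, ∑ j, ω i j * (inner ℝ (z i) (z' j) : ℝ)| ≤ T := by
    intro ω hω
    calc |∑ i, ∑ j, ω i j * (inner ℝ (z i) (z' j) : ℝ)|
        ≤ ∑ i, ∑ j, |ω i j * (inner ℝ (z i) (z' j) : ℝ)| := by
          refine (Finset.abs_sum_le_sum_abs _ _).trans ?_
          exact Finset.sum_le_sum fun i _ => Finset.abs_sum_le_sum_abs _ _
      _ ≤ T := by
          refine Finset.sum_le_sum fun i _ => Finset.sum_le_sum fun j _ => ?_
          rw [abs_mul, abs_of_nonneg (hω.1 i j)]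
          have h1 : ω i j ≤ 1 := by
            have := Finset.single_le_sum (f := fun j => ω i j)
              (fun k _ => hω.1 i k) (Finset.mem_univ j)
            rw [hω.2.1 i] at this; exact this
          nlinarith [abs_nonneg ((inner ℝ (z i) (z' j) : ℝ))]
  have hlow : ∀ c ∈ {c : ℝ | ∃ ω : Matrix (Fin n) (Fin n) ℝ, DoublyStochastic ω ∧
      c = ∑ i, ∑ j, ω i j * ‖z i - z' j‖ ^ 2}, 2 * n * r ^ 2 - 2 * T ≤ c := by
    rintro c ⟨ω, hω, rfl⟩
    rw [key_sum z z' hz hz' hω]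
    have := (abs_le.mp (hbound ω hω)).2
    linarith
  rw [abs_le]
  constructor
  · -- lower: -(2T) ≤ W2sq - 2nr²
    have : 2 * n * r ^ 2 - 2 * T ≤ W2sq z z' := le_csInf (W2sq_set_nonempty hn z z') hlow
    linarith
  · -- upper
    have hmem : (∑ i, ∑ j, (fun _ _ : Fin n => (n:ℝ)⁻¹) i j * ‖z i - z' j‖ ^ 2)
        ∈ {c : ℝ | ∃ ω : Matrix (Fin n) (Fin n) ℝ, DoublyStochastic ω ∧
          c = ∑ i, ∑ j, ω i j * ‖z i - z' j‖ ^ 2} := ⟨_, unif_DS hn, rfl⟩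
    have h1 : W2sq z z' ≤ ∑ i, ∑ j, (fun _ _ : Fin n => (n:ℝ)⁻¹) i j * ‖z i - z' j‖ ^ 2 :=
      csInf_le ⟨2 * n * r ^ 2 - 2 * T, hlow⟩ hmem
    have h2 := key_sum z z' hz hz' (unif_DS hn (n := n))
    have := (abs_le.mp (hbound _ (unif_DS hn (n := n)))).1
    rw [h2] at h1
    linarith
end Det

section Moment
variable {d : ℕ}
local notation "E" => EuclideanSpace ℝ (Fin d)

lemma ae_norm_eq {r : ℝ} (σ : Measure E)
    (hsupp : σ (Metric.sphere (0 : E) r)ᶜ = 0) : ∀ᵐ x ∂σ, ‖x‖ = r := by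
  rw [ae_iff]
  convert hsupp using 2
  ext x
  simp [Metric.mem_sphere, dist_zero_right]

lemma integrable_inner_sq_s16 {r : ℝ} (σ : Measure E) [IsProbabilityMeasure σ]
    (hsupp : σ (Metric.sphere (0 : E) r)ᶜ = 0) (v : E) :
    Integrable (fun x => (inner ℝ x v : ℝ) ^ 2) σ := by
  refine Integrable.mono' (integrable_const (r ^ 2 * ‖v‖ ^ 2)) ?_ ?_
  · exact (Continuous.pow (continuous_id.inner continuous_const) 2).aestronglyMeasurable
  · filter_upwards [ae_norm_eq σ hsupp] with x hx
    have h := abs_real_inner_le_norm x v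
    rw [Real.norm_eq_abs, abs_pow, sq_abs]
    have h2 : |inner ℝ x v| ^ 2 ≤ (‖x‖ * ‖v‖) ^ 2 :=
      pow_le_pow_left₀ (abs_nonneg _) h 2
    rw [sq_abs, hx] at h2
    nlinarith [h2]

lemma inner_sq_integral (hd : 1 ≤ d) {r : ℝ} (hr : 0 < r)
    (σ : Measure E) [IsProbabilityMeasure σ]
    (hsupp : σ (Metric.sphere (0 : E) r)ᶜ = 0)
    (hinv : ∀ A : E ≃ₗᵢ[ℝ] E, Measure.map A σ = σ)
    (u : E) (hu : ‖u‖ = r) :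
    ∫ x, (inner ℝ x u : ℝ) ^ 2 ∂σ = r ^ 4 / d := by
  set v : Fin d → E := fun k => EuclideanSpace.single k r with hv
  have hnv : ∀ k, ‖v k‖ = r := fun k => by
    simp [hv, EuclideanSpace.norm_single, abs_of_pos hr]
  -- each coordinate has the same integral as u
  have hcoord : ∀ k : Fin d, ∫ x, (inner ℝ x u : ℝ) ^ 2 ∂σ
      = ∫ x, (inner ℝ x (v k) : ℝ) ^ 2 ∂σ := by
    intro k
    set A : E ≃ₗᵢ[ℝ] E := Submodule.reflection (ℝ ∙ (v k - u))ᗮ with hA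
    have hAv : A (v k) = u := Submodule.reflection_sub (by rw [hnv, hu])
    have hmap : Measure.map A σ = σ := hinv A
    calc ∫ x, (inner ℝ x u : ℝ) ^ 2 ∂σ
        = ∫ x, (inner ℝ x u : ℝ) ^ 2 ∂(Measure.map A σ) := by rw [hmap]
      _ = ∫ x, (inner ℝ (A x) u : ℝ) ^ 2 ∂σ := by
          rw [integral_map A.continuous.measurable.aemeasurable]
          exact (Continuous.pow (continuous_id.inner continuous_const) 2).aestronglyMeasurable
      _ = ∫ x, (inner ℝ x (v k) : ℝ) ^ 2 ∂σ := by
          congr 1; ext x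
          rw [← hAv, LinearIsometryEquiv.inner_map_map]
  -- sum over coordinates
  have hsum : (d : ℝ) * ∫ x, (inner ℝ x u : ℝ) ^ 2 ∂σ
      = ∫ x, ∑ k : Fin d, (inner ℝ x (v k) : ℝ) ^ 2 ∂σ := by
    rw [integral_finset_sum _ (fun k _ => integrable_inner_sq_s16 σ hsupp (v k))]
    rw [Finset.sum_congr rfl fun k _ => (hcoord k).symm]
    simp [Finset.sum_const, mul_comm]
  have hptwise : ∀ x : E, ∑ k : Fin d, (inner ℝ x (v k) : ℝ) ^ 2 = r ^ 2 * ‖x‖ ^ 2 := by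
    intro x
    have hx : ‖x‖ ^ 2 = ∑ k : Fin d, (x k) ^ 2 := by
      rw [EuclideanSpace.norm_eq, Real.sq_sqrt (by positivity)]
      simp [Real.norm_eq_abs, sq_abs]
    have : ∀ k, (inner ℝ x (v k) : ℝ) = r * x k := by
      intro k
      simpa [hv] using EuclideanSpace.inner_single_right (𝕜 := ℝ) k r x
    simp only [this, mul_pow, ← Finset.mul_sum, hx]
  have hfinal : ∫ x, ∑ k : Fin d, (inner ℝ x (v k) : ℝ) ^ 2 ∂σ = r ^ 4 := by
    rw [integral_congr_ae (g := fun _ => r ^ 4)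
      (by filter_upwards [ae_norm_eq σ hsupp] with x hx
          rw [hptwise, hx]; ring)]
    simp
  have hd' : (d : ℝ) ≠ 0 := by positivity
  rw [eq_div_iff hd', mul_comm] at *
  rw [← hfinal, ← hsum]
  ring
end Moment

section Exp
variable {d : ℕ} {Ω : Type*} [MeasurableSpace Ω]
local notation "E" => EuclideanSpace ℝ (Fin d)

lemma exp_inner_sq (P : Measure Ω) [IsProbabilityMeasure P]
    (hd : 1 ≤ d) {r : ℝ} (hr : 0 < r) (σ : Measure E) [IsProbabilityMeasure σ]
    (hsupp : σ (Metric.sphere (0 : E) r)ᶜ = 0)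
    (hinv : ∀ A : E ≃ₗᵢ[ℝ] E, Measure.map A σ = σ)
    (Y Y' : Ω → E) (hY : Measurable Y) (hY' : Measurable Y')
    (hYlaw : Measure.map Y P = σ) (hY'law : Measure.map Y' P = σ)
    (hind : IndepFun Y Y' P) :
    ∫ ω, (inner ℝ (Y ω) (Y' ω) : ℝ) ^ 2 ∂P = r ^ 4 / d := by
  have hpair : Measure.map (fun ω => (Y ω, Y' ω)) P = σ.prod σ := by
    rw [(indepFun_iff_map_prod_eq_prod_map_map hY.aemeasurable hY'.aemeasurable).mp hind,
      hYlaw, hY'law]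
  have hfc : Continuous fun p : E × E => (inner ℝ p.1 p.2 : ℝ) ^ 2 :=
    (continuous_fst.inner continuous_snd).pow 2
  have hstep : ∫ ω, (inner ℝ (Y ω) (Y' ω) : ℝ) ^ 2 ∂P
      = ∫ p : E × E, (inner ℝ p.1 p.2 : ℝ) ^ 2 ∂(σ.prod σ) := by
    rw [← hpair, integral_map (hY.prodMk hY').aemeasurable hfc.aestronglyMeasurable]
  -- a.e. bound on the product
  have haeprod : ∀ᵐ p : E × E ∂(σ.prod σ), ‖p.1‖ = r ∧ ‖p.2‖ = r := by
    have hb : σ.prod σ ((Metric.sphere (0:E) r)ᶜ ×ˢ (Set.univ : Set E)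
        ∪ (Set.univ : Set E) ×ˢ (Metric.sphere (0:E) r)ᶜ) = 0 := by
      refine measure_union_null ?_ ?_ <;> rw [Measure.prod_prod] <;> simp [hsupp]
    rw [ae_iff]
    refine measure_mono_null ?_ hb
    intro p hp
    simp only [Set.mem_setOf_eq, not_and_or] at hp
    rcases hp with h | h
    · exact Or.inl ⟨by simpa [dist_zero_right] using h, Set.mem_univ _⟩
    · exact Or.inr ⟨Set.mem_univ _, by simpa [dist_zero_right] using h⟩
  have hint : Integrable (fun p : E × E => (inner ℝ p.1 p.2 : ℝ) ^ 2) (σ.prod σ) := by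
    refine Integrable.mono' (integrable_const (r ^ 2 * r ^ 2)) hfc.aestronglyMeasurable ?_
    filter_upwards [haeprod] with p hp
    have h := abs_real_inner_le_norm p.1 p.2
    have h2 : |inner ℝ p.1 p.2| ^ 2 ≤ (‖p.1‖ * ‖p.2‖) ^ 2 :=
      pow_le_pow_left₀ (abs_nonneg _) h 2
    rw [sq_abs, hp.1, hp.2] at h2
    rw [Real.norm_eq_abs, abs_pow, sq_abs]
    nlinarith [h2]
  rw [hstep, integral_prod _ hint]
  have haefst : ∀ᵐ x ∂σ, ∫ y, (inner ℝ x y : ℝ) ^ 2 ∂σ = r ^ 4 / d := by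
    filter_upwards [ae_norm_eq σ hsupp] with x hx
    have := inner_sq_integral hd hr σ hsupp hinv x hx
    rw [← this]
    congr 1; ext y; rw [real_inner_comm]
  rw [integral_congr_ae haefst]
  simp
end Exp



/-- probabilistic form of Corollary 1. For each dimension `d ≥ 1`, let
`X_1,…,X_n, X'_1,…,X'_n` (depending on `d`) be `2n` independent random points, each
distributed according to the uniform probability measure `σ d` on the sphere
`S_r^{d−1} ⊂ ℝ^d` (formalized as: a rotation-invariant probability measure concentrated on
the sphere — these properties characterize it uniquely). Then for every `t > 0`,
`P(|W₂²(Z, Z') − 2nr²| > nt) ≤ 4n²r⁴ / (d t²)`; in particular, for fixed `n, r, t` this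
probability tends to `0` as `d → ∞`, so `W₂(Z, Z')` converges in probability to `√(2n)·r`. -/

theorem W2sq_concentration (n : ℕ) (hn : 1 ≤ n) (r : ℝ) (hr : 0 < r)
    (Ω : Type*) [MeasurableSpace Ω] (P : Measure Ω) [IsProbabilityMeasure P]
    (σ : ∀ d : ℕ, Measure (EuclideanSpace ℝ (Fin d)))
    (X X' : ∀ d : ℕ, Fin n → Ω → EuclideanSpace ℝ (Fin d))
    (hprob : ∀ d, 1 ≤ d → IsProbabilityMeasure (σ d))
    (hsupp : ∀ d, 1 ≤ d → σ d (Metric.sphere (0 : EuclideanSpace ℝ (Fin d)) r)ᶜ = 0)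
    (hinv : ∀ d, 1 ≤ d → ∀ A : EuclideanSpace ℝ (Fin d) ≃ₗᵢ[ℝ] EuclideanSpace ℝ (Fin d),
      Measure.map A (σ d) = σ d)
    (hXmeas : ∀ d, 1 ≤ d → ∀ i, Measurable (X d i))
    (hX'meas : ∀ d, 1 ≤ d → ∀ i, Measurable (X' d i))
    (hXlaw : ∀ d, 1 ≤ d → ∀ i, Measure.map (X d i) P = σ d)
    (hX'law : ∀ d, 1 ≤ d → ∀ i, Measure.map (X' d i) P = σ d)
    (hindep : ∀ d, 1 ≤ d → iIndepFun (Sum.elim (X d) (X' d)) P) :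
    (∀ d, 1 ≤ d → ∀ t : ℝ, 0 < t →
        P {ω_ | (n : ℝ) * t
              < |W2sq (fun i => X d i ω_) (fun i => X' d i ω_) - 2 * n * r ^ 2|}
          ≤ ENNReal.ofReal (4 * n ^ 2 * r ^ 4 / (d * t ^ 2))) ∧
      (∀ t : ℝ, 0 < t →
        Tendsto
          (fun d : ℕ =>
            P {ω_ | (n : ℝ) * t
                < |W2sq (fun i => X d i ω_) (fun i => X' d i ω_) - 2 * n * r ^ 2|})
          atTop (nhds 0)) ∧
      ∀ t : ℝ, 0 < t →
        Tendsto
          (fun d : ℕ =>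
            P {ω_ | t
                < |Real.sqrt (W2sq (fun i => X d i ω_) (fun i => X' d i ω_))
                    - Real.sqrt (2 * n) * r|})
          atTop (nhds 0) := by
  have hn0 : (n : ℝ) ≠ 0 := by positivity
  -- Part 1: the main bound
  have main : ∀ d, 1 ≤ d → ∀ t : ℝ, 0 < t →
      P {ω_ | (n : ℝ) * t
            < |W2sq (fun i => X d i ω_) (fun i => X' d i ω_) - 2 * n * r ^ 2|}
        ≤ ENNReal.ofReal (4 * n ^ 2 * r ^ 4 / (d * t ^ 2)) := by
    intro d hd t ht
    haveI := hprob d hd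
    have hd0 : (d : ℝ) ≠ 0 := by positivity
    set Y : Fin n × Fin n → Ω → ℝ :=
      fun p ω_ => (inner ℝ (X d p.1 ω_) (X' d p.2 ω_) : ℝ) with hY
    have hYmeas : ∀ p, Measurable (Y p) :=
      fun p => (hXmeas d hd p.1).inner (hX'meas d hd p.2)
    set S : Ω → ℝ := fun ω_ => ∑ p : Fin n × Fin n, |Y p ω_| with hS
    have hSmeas : Measurable S :=
      Finset.measurable_sum _ fun p _ => (hYmeas p).abs
    -- a.e. all points on the sphere
    have hgood : ∀ᵐ ω_ ∂P, (∀ i, ‖X d i ω_‖ = r) ∧ (∀ i, ‖X' d i ω_‖ = r) := by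
      rw [eventually_and]
      constructor <;> rw [ae_all_iff] <;> intro i <;> rw [ae_iff]
      · have : {ω_ | ¬ ‖X d i ω_‖ = r}
            = X d i ⁻¹' (Metric.sphere (0 : EuclideanSpace ℝ (Fin d)) r)ᶜ := by
          ext ω_; simp [dist_zero_right]
        rw [this, ← Measure.map_apply (hXmeas d hd i)
          Metric.isClosed_sphere.measurableSet.compl,
          hXlaw d hd i]
        exact hsupp d hd
      · have : {ω_ | ¬ ‖X' d i ω_‖ = r}
            = X' d i ⁻¹' (Metric.sphere (0 : EuclideanSpace ℝ (Fin d)) r)ᶜ := by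
          ext ω_; simp [dist_zero_right]
        rw [this, ← Measure.map_apply (hX'meas d hd i)
          Metric.isClosed_sphere.measurableSet.compl,
          hX'law d hd i]
        exact hsupp d hd
    -- each |Y p| ≤ r^2 a.e.
    have hYbdd : ∀ᵐ ω_ ∂P, ∀ p : Fin n × Fin n, |Y p ω_| ≤ r ^ 2 := by
      filter_upwards [hgood] with ω_ hg p
      have h := abs_real_inner_le_norm (X d p.1 ω_) (X' d p.2 ω_)
      rw [hg.1 p.1, hg.2 p.2] at h
      calc |Y p ω_| ≤ r * r := h
        _ = r ^ 2 := by ring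
    -- integrability of Y p ^ 2
    have hYint : ∀ p, Integrable (fun ω_ => Y p ω_ ^ 2) P := by
      intro p
      refine Integrable.mono' (integrable_const (r ^ 4)) ((hYmeas p).pow_const 2).aestronglyMeasurable ?_
      filter_upwards [hYbdd] with ω_ hb
      have := hb p
      rw [Real.norm_eq_abs, abs_pow]
      nlinarith [abs_nonneg (Y p ω_)]
    -- integrability of S ^ 2
    have hSnn : ∀ ω_, 0 ≤ S ω_ :=
      fun ω_ => Finset.sum_nonneg fun p _ => abs_nonneg _
    have hSbdd : ∀ᵐ ω_ ∂P, S ω_ ≤ n ^ 2 * r ^ 2 := by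
      filter_upwards [hYbdd] with ω_ hb
      calc S ω_ ≤ ∑ _p : Fin n × Fin n, r ^ 2 := Finset.sum_le_sum fun p _ => hb p
        _ = n ^ 2 * r ^ 2 := by
            rw [Finset.sum_const, Finset.card_univ, Fintype.card_prod, Fintype.card_fin,
              nsmul_eq_mul]
            push_cast; ring
    have hSint : Integrable (fun ω_ => S ω_ ^ 2) P := by
      refine Integrable.mono' (integrable_const ((n ^ 2 * r ^ 2) ^ 2))
        (hSmeas.pow_const 2).aestronglyMeasurable ?_
      filter_upwards [hSbdd] with ω_ hb
      rw [Real.norm_eq_abs, abs_pow, abs_of_nonneg (hSnn ω_)]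
      have h0 := hSnn ω_
      nlinarith
    -- second moment of each Y p
    have hYmom : ∀ p : Fin n × Fin n, ∫ ω_, Y p ω_ ^ 2 ∂P = r ^ 4 / d := by
      intro p
      refine exp_inner_sq P hd hr (σ d) (hsupp d hd) (hinv d hd) _ _
        (hXmeas d hd p.1) (hX'meas d hd p.2) (hXlaw d hd p.1) (hX'law d hd p.2) ?_
      exact (hindep d hd).indepFun (i := Sum.inl p.1) (j := Sum.inr p.2) (by simp)
    -- E[S²] ≤ n⁴ r⁴ / d
    have hES : ∫ ω_, S ω_ ^ 2 ∂P ≤ n ^ 4 * r ^ 4 / d := by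
      have hptw : ∀ ω_, S ω_ ^ 2 ≤ (n ^ 2 : ℝ) * ∑ p : Fin n × Fin n, Y p ω_ ^ 2 := by
        intro ω_
        have := sq_sum_le_card_mul_sum_sq (s := (Finset.univ : Finset (Fin n × Fin n)))
          (f := fun p => |Y p ω_|)
        simp only [Finset.card_univ, Fintype.card_prod, Fintype.card_fin, sq_abs] at this
        calc S ω_ ^ 2 ≤ (n * n : ℕ) * ∑ p : Fin n × Fin n, Y p ω_ ^ 2 := by
              exact_mod_cast this
          _ = (n ^ 2 : ℝ) * ∑ p : Fin n × Fin n, Y p ω_ ^ 2 := by push_cast; ring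
      have hint2 : Integrable (fun ω_ => (n ^ 2 : ℝ) * ∑ p : Fin n × Fin n, Y p ω_ ^ 2) P :=
        (integrable_finset_sum _ fun p _ => hYint p).const_mul _
      calc ∫ ω_, S ω_ ^ 2 ∂P
          ≤ ∫ ω_, (n ^ 2 : ℝ) * ∑ p : Fin n × Fin n, Y p ω_ ^ 2 ∂P :=
            integral_mono hSint hint2 hptw
        _ = (n ^ 2 : ℝ) * ∑ p : Fin n × Fin n, ∫ ω_, Y p ω_ ^ 2 ∂P := by
            rw [integral_const_mul, integral_finset_sum _ fun p _ => hYint p]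
        _ = n ^ 4 * r ^ 4 / d := by
            simp only [hYmom, Finset.sum_const, Finset.card_univ, Fintype.card_prod,
              Fintype.card_fin, nsmul_eq_mul]
            push_cast
            field_simp
    -- Markov
    set ε : ℝ := ((n : ℝ) * t / 2) ^ 2 with hε
    have hε0 : 0 < ε := by positivity
    have hmar := mul_meas_ge_le_integral_of_nonneg
      (f := fun ω_ => S ω_ ^ 2) (μ := P)
      (Filter.Eventually.of_forall fun ω_ => by positivity) hSint ε
    -- event inclusion
    have hsub : P {ω_ | (n : ℝ) * t
          < |W2sq (fun i => X d i ω_) (fun i => X' d i ω_) - 2 * n * r ^ 2|}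
        ≤ P {ω_ | ε ≤ S ω_ ^ 2} := by
      refine measure_mono_ae ?_
      filter_upwards [hgood] with ω_ hg hmem
      have habs := W2sq_abs_le hn (fun i => X d i ω_) (fun i => X' d i ω_) hg.1 hg.2
      have hT : ∑ i, ∑ j, |(inner ℝ (X d i ω_) (X' d j ω_) : ℝ)| = S ω_ := by
        rw [hS]
        exact (Fintype.sum_prod_type (f := fun p : Fin n × Fin n => |Y p ω_|)).symm
      rw [hT] at habs
      have h1 : (n : ℝ) * t < 2 * S ω_ := lt_of_lt_of_le hmem habs
      have h2 : (n : ℝ) * t / 2 < S ω_ := by linarith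
      have h3 : ε ≤ S ω_ ^ 2 := by
        rw [hε]
        have hnt : 0 ≤ (n : ℝ) * t / 2 := by positivity
        nlinarith [hSnn ω_]
      exact h3
    -- put it together
    have htoReal : (P {ω_ | ε ≤ S ω_ ^ 2}).toReal ≤ (n ^ 4 * r ^ 4 / d) / ε := by
      rw [le_div_iff₀ hε0]
      calc (P {ω_ | ε ≤ S ω_ ^ 2}).toReal * ε = ε * (P {ω_ | ε ≤ S ω_ ^ 2}).toReal := by ring
        _ ≤ ∫ ω_, S ω_ ^ 2 ∂P := hmar
        _ ≤ n ^ 4 * r ^ 4 / d := hES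
    have hfin : P {ω_ | ε ≤ S ω_ ^ 2} ≤ ENNReal.ofReal (4 * n ^ 2 * r ^ 4 / (d * t ^ 2)) := by
      have h1 : P {ω_ | ε ≤ S ω_ ^ 2} = ENNReal.ofReal (P {ω_ | ε ≤ S ω_ ^ 2}).toReal :=
        (ENNReal.ofReal_toReal (measure_ne_top P _)).symm
      rw [h1]
      refine ENNReal.ofReal_le_ofReal (htoReal.trans_eq ?_)
      rw [hε]
      field_simp
      ring
    exact hsub.trans hfin
  refine ⟨main, ?_, ?_⟩
  · -- Part 2
    intro t ht
    have hlim : Tendsto (fun d : ℕ => ENNReal.ofReal (4 * n ^ 2 * r ^ 4 / (d * t ^ 2)))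
        atTop (nhds 0) := by
      have h1 : Tendsto (fun d : ℕ => (4 * (n:ℝ) ^ 2 * r ^ 4 / t ^ 2) / d) atTop (nhds 0) :=
        tendsto_const_div_atTop_nhds_zero_nat _
      have h2 : Tendsto (fun d : ℕ => (4 * (n:ℝ) ^ 2 * r ^ 4 / (d * t ^ 2))) atTop (nhds 0) := by
        refine h1.congr fun d => ?_
        rw [div_div]
        ring_nf
      have := (ENNReal.continuous_ofReal.tendsto 0).comp h2
      rw [ENNReal.ofReal_zero] at this; exact this
    refine tendsto_of_tendsto_of_tendsto_of_le_of_le' tendsto_const_nhds hlim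
      (Filter.Eventually.of_forall fun d => zero_le) ?_
    filter_upwards [Filter.eventually_ge_atTop 1] with d hd
    exact main d hd t ht
  · -- Part 3
    intro t ht
    set c : ℝ := 2 * n * r ^ 2 with hc
    have hc0 : 0 < c := by positivity
    set t' : ℝ := t * Real.sqrt c / n with ht'
    have ht'0 : 0 < t' := by positivity
    have hsqrtc : Real.sqrt c = Real.sqrt (2 * n) * r := by
      rw [hc, Real.sqrt_mul (by positivity), Real.sqrt_sq hr.le]
    have hsub : ∀ d : ℕ, 1 ≤ d →
        P {ω_ | t < |Real.sqrt (W2sq (fun i => X d i ω_) (fun i => X' d i ω_))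
            - Real.sqrt (2 * n) * r|}
          ≤ P {ω_ | (n : ℝ) * t'
            < |W2sq (fun i => X d i ω_) (fun i => X' d i ω_) - 2 * n * r ^ 2|} := by
      intro d hd
      refine measure_mono fun ω_ hmem => ?_
      simp only [Set.mem_setOf_eq] at hmem ⊢
      set W : ℝ := W2sq (fun i => X d i ω_) (fun i => X' d i ω_) with hW
      have hW0 : 0 ≤ W := W2sq_nonneg hn _ _
      set a : ℝ := Real.sqrt W with ha
      set b : ℝ := Real.sqrt c with hb
      have ha0 : 0 ≤ a := Real.sqrt_nonneg _
      have hb0 : 0 < b := Real.sqrt_pos.mpr hc0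
      have haa : a ^ 2 = W := Real.sq_sqrt hW0
      have hbb : b ^ 2 = c := Real.sq_sqrt hc0.le
      rw [← hsqrtc] at hmem
      have hnt' : (n : ℝ) * t' = t * b := by
        rw [ht', hb]; field_simp
      rw [hnt']
      have hWc : W - 2 * n * r ^ 2 = a ^ 2 - b ^ 2 := by rw [haa, hbb, hc]
      rw [hWc]
      have hfac : |a ^ 2 - b ^ 2| = |a - b| * (a + b) := by
        rw [sq_sub_sq, abs_mul, abs_of_nonneg (by positivity : (0:ℝ) ≤ a + b), mul_comm]
      rw [hfac]
      calc t * b < |a - b| * b := mul_lt_mul_of_pos_right hmem hb0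
        _ ≤ |a - b| * (a + b) := by
            refine mul_le_mul_of_nonneg_left ?_ (abs_nonneg _)
            linarith
    -- squeeze
    have h2 := (fun t ht => ?_ : ∀ t : ℝ, 0 < t → Tendsto
      (fun d : ℕ => P {ω_ | (n : ℝ) * t
          < |W2sq (fun i => X d i ω_) (fun i => X' d i ω_) - 2 * n * r ^ 2|})
      atTop (nhds 0))
    · refine tendsto_of_tendsto_of_tendsto_of_le_of_le' tendsto_const_nhds (h2 t' ht'0)
        (Filter.Eventually.of_forall fun d => zero_le) ?_
      filter_upwards [Filter.eventually_ge_atTop 1] with d hd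
      exact hsub d hd
    · -- reprove part 2 (as above)
      have hlim : Tendsto (fun d : ℕ => ENNReal.ofReal (4 * n ^ 2 * r ^ 4 / (d * t ^ 2)))
          atTop (nhds 0) := by
        have h1 : Tendsto (fun d : ℕ => (4 * (n:ℝ) ^ 2 * r ^ 4 / t ^ 2) / d) atTop (nhds 0) :=
          tendsto_const_div_atTop_nhds_zero_nat _
        have h2' : Tendsto (fun d : ℕ => (4 * (n:ℝ) ^ 2 * r ^ 4 / (d * t ^ 2))) atTop (nhds 0) := by
          refine h1.congr fun d => ?_
          rw [div_div]
          ring_nf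
        have := (ENNReal.continuous_ofReal.tendsto 0).comp h2'
        rw [ENNReal.ofReal_zero] at this; exact this
      refine tendsto_of_tendsto_of_tendsto_of_le_of_le' tendsto_const_nhds hlim
        (Filter.Eventually.of_forall fun d => zero_le) ?_
      filter_upwards [Filter.eventually_ge_atTop 1] with d hd
      exact main d hd t ht
end
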